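/- With A and J the n×n complex matrices defined in the context, one has A² = −J. -/

import Mathlib

/-!
With `s = v*v` and `P = v v*/s` one has `v* P = v*`, `P v = v` and `P² = P`, so block
multiplication gives `A² = diag(z² - s, (z² - s) P) = (z² - s) J`. Since `z̄ = -z`, the
normalisation `|z|² + s = 1` reads `z² - s = -1`.
-/

open Matrix

theorem sum_eq_mul_dotProduct {K n : Type*} [NonUnitalNonAssocSemiring K] [Fintype n]
    (w v : n → K) {f : n → K} (c : K) (hf : ∀ k, f k = c * (w k * v k)) :
    ∑ k, f k = c * (w ⬝ᵥ v) := by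
  simp only [hf, ← Finset.mul_sum, dotProduct]

theorem fromBlocks_sq_eq_smul {K o n : Type*} [Field K] [Unique o] [DecidableEq o] [Fintype n]
    [DecidableEq n] (z : K) (v w : n → K) (hs : w ⬝ᵥ v ≠ 0) :
    fromBlocks (of fun _ _ => z) (of fun (_ : o) j => -w j) (of fun i (_ : o) => v i)
        (of fun i j => -(v i * z * w j) / w ⬝ᵥ v) ^ 2 =
      (z ^ 2 - w ⬝ᵥ v) • fromBlocks 1 0 0 (of fun i j => v i * w j / w ⬝ᵥ v) := by
  set s := w ⬝ᵥ v
  rw [sq, fromBlocks_multiply, fromBlocks_smul, fromBlocks_inj]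
  refine ⟨?_, ?_, ?_, ?_⟩ <;> ext i j <;>
    simp only [mul_apply, Matrix.add_apply, Matrix.smul_apply, of_apply, smul_eq_mul,
      Matrix.zero_apply, Fintype.sum_unique, one_apply]
  · rw [sum_eq_mul_dotProduct w v (-1) fun k => by ring, if_pos (Subsingleton.elim i j)]
    ring
  · rw [sum_eq_mul_dotProduct w v (z * w j / s) fun k => by ring]
    field_simp
    ring
  · rw [sum_eq_mul_dotProduct w v (-(v i * z) / s) fun k => by ring]
    field_simp
    ring
  · rw [sum_eq_mul_dotProduct w v (v i * z ^ 2 * w j / s ^ 2) fun k => by ring]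
    field_simp
    ring

theorem stmt_1 (n : ℕ) (z : ℂ) (hz : z + starRingEnd ℂ z = 0)
    (v : Fin (n - 1) → ℂ) (hv : v ≠ 0)
    (hnorm : z * starRingEnd ℂ z + ∑ i, starRingEnd ℂ (v i) * v i = 1)
    (A J : Matrix (Fin 1 ⊕ Fin (n - 1)) (Fin 1 ⊕ Fin (n - 1)) ℂ)
    (hA : A = Matrix.fromBlocks
      (Matrix.of fun _ _ => z)
      (Matrix.of fun _ j => -starRingEnd ℂ (v j))
      (Matrix.of fun i _ => v i)
      (Matrix.of fun i j =>
        -(v i * z * starRingEnd ℂ (v j)) / (∑ k, starRingEnd ℂ (v k) * v k)))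
    (hJ : J = Matrix.fromBlocks 1 0 0
      (Matrix.of fun i j =>
        v i * starRingEnd ℂ (v j) / (∑ k, starRingEnd ℂ (v k) * v k))) :
    A ^ 2 = -J := by
  let w : Fin (n - 1) → ℂ := fun j => starRingEnd ℂ (v j)
  have hs : w ⬝ᵥ v ≠ 0 := by
    open scoped ComplexOrder in exact dotProduct_star_self_eq_zero.not.mpr hv
  have hcoeff : z ^ 2 - w ⬝ᵥ v = -1 := by
    have hnorm' : z * starRingEnd ℂ z + w ⬝ᵥ v = 1 := hnorm
    linear_combination z * hz - hnorm'
  have hsq := fromBlocks_sq_eq_smul (o := Fin 1) z v w hs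
  rw [hcoeff, neg_one_smul] at hsq
  exact hA ▸ hJ ▸ hsq
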